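/- arXiv:1701.02910 — 2 statements merged into one kernel-verified Lean document; each statement's English description precedes it below -/
import Mathlib

section
/- Let b be a prime, α, β > 1 reals, let 0 < γ_j^{(1)} ≤ 1 and 0 < γ_j^{(2)} ≤ 1 for all j, and fix s,t ∈ ℕ with s,t ≥ 1. Then for ν > 0, the family ((ρ_{α,γ^{(1)}}(k) · r_{β,γ^{(2)}}(l))^ν)_{(k,l) ∈ ℕ^s × ℤ^t} is summable if and only if ν > max(1/α, 1/β). -/
open scoped BigOperators

/-- The Walsh-space decay function ρ_{α,γ} : ℕ → ℝ,
    ρ_{α,γ}(0) = 1 and ρ_{α,γ}(k) = γ·b^{-α·⌊log_b k⌋} for k ≥ 1. -/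
noncomputable def rho (b : ℕ) (α γ : ℝ) (k : ℕ) : ℝ :=
  if k = 0 then 1 else γ * (b : ℝ) ^ (-(α * (Nat.log b k : ℝ)))

/-- The Korobov-space decay function r_{β,γ} : ℤ → ℝ,
    r_{β,γ}(0) = 1 and r_{β,γ}(l) = γ·|l|^{-β} for l ≠ 0. -/
noncomputable def rK (β γ : ℝ) (l : ℤ) : ℝ :=
  if l = 0 then 1 else γ * |(l : ℝ)| ^ (-β)

/-!
Both decay functions are, up to constant factors, powers of the index: since
`k / b < b ^ ⌊log_b k⌋ ≤ k`, we have `ρ_{α,γ}(k) ≍ k ^ (-α)`, and `r_{β,γ}(l) = γ |l| ^ (-β)`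
for `l ≠ 0`. Hence `ρ ^ ν` and `r ^ ν` are summable exactly when `α ν > 1`, resp. `β ν > 1`.
The family in the theorem is a product of nonnegative one-dimensional families, each nonzero
at `0`, and such a product is summable if and only if every factor is.
-/

open Filter Asymptotics Finset

theorem summable_prod_mul_iff_of_nonneg {α β : Type*} {f : α → ℝ} {g : β → ℝ}
    (hf : ∀ a, 0 ≤ f a) (hg : ∀ b, 0 ≤ g b) {a₀ : α} {b₀ : β} (ha₀ : f a₀ ≠ 0)
    (hb₀ : g b₀ ≠ 0) :
    Summable (fun p : α × β => f p.1 * g p.2) ↔ Summable f ∧ Summable g :=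
  ⟨fun h => ⟨(summable_mul_right_iff hb₀).1 (h.prod_symm.prod_factor b₀),
      (summable_mul_left_iff ha₀).1 (h.prod_factor a₀)⟩,
    fun h => h.1.mul_of_nonneg h.2 hf hg⟩

theorem summable_pi_prod_iff_of_nonneg {ι : Type*} {κ : ι → Type*} [Fintype ι]
    {h : (i : ι) → κ i → ℝ} (h0 : ∀ i k, 0 ≤ h i k) {x₀ : (i : ι) → κ i}
    (hx₀ : ∀ i, h i (x₀ i) ≠ 0) :
    Summable (fun x : (i : ι) → κ i => ∏ i, h i (x i)) ↔ ∀ i, Summable (h i) := by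
  classical
  constructor
  · intro hs i
    have hc : ∏ j ∈ univ \ {i}, h j (x₀ j) ≠ 0 := prod_ne_zero_iff.2 fun j _ => hx₀ j
    refine (summable_mul_right_iff hc).1 <|
      (hs.comp_injective (Function.update_injective x₀ i)).congr fun k => ?_
    simp only [Function.comp_apply, Function.apply_update h x₀, prod_update_of_mem (mem_univ i)]
  · intro hs
    refine summable_of_sum_le (c := ∏ i, ∑' k, h i k)
      (fun x => prod_nonneg fun i _ => h0 i (x i)) fun u => ?_
    calc ∑ x ∈ u, ∏ i, h i (x i)
        ≤ ∑ x ∈ Fintype.piFinset fun i => u.image (· i), ∏ i, h i (x i) :=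
          sum_le_sum_of_subset_of_nonneg
            (fun x hx => Fintype.mem_piFinset.2 fun i => mem_image_of_mem _ hx)
            (fun x _ _ => prod_nonneg fun i _ => h0 i (x i))
      _ = ∏ i, ∑ k ∈ u.image (· i), h i k := (prod_univ_sum _ _).symm
      _ ≤ ∏ i, ∑' k, h i k :=
          prod_le_prod (fun i _ => sum_nonneg fun k _ => h0 i k)
            fun i _ => (hs i).sum_le_tsum _ fun k _ => h0 i k

theorem Real.summable_abs_int_rpow_iff {p : ℝ} :
    Summable (fun n : ℤ => |(n : ℝ)| ^ (-p)) ↔ 1 < p := by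
  refine ⟨fun h => ?_, Real.summable_abs_int_rpow⟩
  have := h.comp_injective Nat.cast_injective
  simp only [Function.comp_def, Int.cast_natCast, Nat.abs_cast] at this
  rwa [Real.summable_nat_rpow, neg_lt_neg_iff] at this

theorem summable_rpow_iff_of_isTheta_natCast_rpow {f : ℕ → ℝ} {a ν : ℝ} (hf : ∀ k, 0 ≤ f k)
    (h : f =Θ[atTop] fun k : ℕ => (k : ℝ) ^ (-a)) :
    Summable (fun k => f k ^ ν) ↔ 1 < a * ν := by
  have hpow := h.rpow (r := ν) (Eventually.of_forall hf)
    (Eventually.of_forall fun k => Real.rpow_nonneg k.cast_nonneg _)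
  rw [hpow.summable_iff_nat]
  simp only [← Real.rpow_mul (Nat.cast_nonneg _), Real.summable_nat_rpow]
  constructor <;> intro <;> linarith

theorem summable_rpow_iff_of_isTheta_abs_intCast_rpow {f : ℤ → ℝ} {a ν : ℝ} (hf : ∀ l, 0 ≤ f l)
    (h : f =Θ[cofinite] fun l : ℤ => |(l : ℝ)| ^ (-a)) :
    Summable (fun l => f l ^ ν) ↔ 1 < a * ν := by
  have hpow := h.rpow (r := ν) (Eventually.of_forall hf)
    (Eventually.of_forall fun l => Real.rpow_nonneg (abs_nonneg _) _)
  rw [hpow.summable_iff]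
  simp only [← Real.rpow_mul (abs_nonneg _), neg_mul, Real.summable_abs_int_rpow_iff]

theorem Nat.isTheta_pow_log {b : ℕ} (hb : 1 < b) :
    (fun k : ℕ => ((b ^ Nat.log b k : ℕ) : ℝ)) =Θ[atTop] fun k => (k : ℝ) := by
  refine ⟨IsBigO.of_bound 1 ?_, IsBigO.of_bound b ?_⟩ <;>
    filter_upwards [eventually_ne_atTop 0] with k hk
    <;> simp only [Real.norm_natCast, one_mul]
  · exact_mod_cast Nat.pow_log_le_self b hk
  · have := Nat.lt_pow_succ_log_self hb k
    rw [Nat.pow_succ] at this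
    exact_mod_cast (this.trans_eq (mul_comm _ _)).le

theorem rho_nonneg {b : ℕ} {α γ : ℝ} (hγ : 0 ≤ γ) (k : ℕ) : 0 ≤ rho b α γ k := by
  unfold rho; split_ifs <;> positivity

theorem rK_nonneg {β γ : ℝ} (hγ : 0 ≤ γ) (l : ℤ) : 0 ≤ rK β γ l := by
  unfold rK; split_ifs <;> positivity

theorem rho_isTheta {b : ℕ} (hb : 1 < b) {α γ : ℝ} (hγ : γ ≠ 0) :
    (fun k => rho b α γ k) =Θ[atTop] fun k : ℕ => (k : ℝ) ^ (-α) := by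
  have hrho : (fun k => rho b α γ k) =ᶠ[atTop]
      fun k => γ * ((b ^ Nat.log b k : ℕ) : ℝ) ^ (-α) := by
    filter_upwards [eventually_ne_atTop 0] with k hk
    rw [rho, if_neg hk, Nat.cast_pow, ← Real.rpow_natCast_mul (Nat.cast_nonneg _), mul_neg,
      mul_comm (Nat.log b k : ℝ)]
  refine hrho.trans_isTheta (IsTheta.const_mul_left hγ ?_)
  exact (Nat.isTheta_pow_log hb).rpow (Eventually.of_forall fun _ => Nat.cast_nonneg _)
    (Eventually.of_forall fun _ => Nat.cast_nonneg _)

theorem rK_isTheta {β γ : ℝ} (hγ : γ ≠ 0) :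
    (fun l => rK β γ l) =Θ[cofinite] fun l : ℤ => |(l : ℝ)| ^ (-β) := by
  have hrK : (fun l => rK β γ l) =ᶠ[cofinite] fun l => γ * |(l : ℝ)| ^ (-β) := by
    filter_upwards [eventually_cofinite_ne 0] with l hl
    rw [rK, if_neg hl]
  exact hrK.trans_isTheta (IsTheta.const_mul_left hγ isTheta_rfl)

theorem summable_rho_rpow_iff {b : ℕ} (hb : 1 < b) {α γ ν : ℝ} (hγ : 0 < γ) :
    Summable (fun k => rho b α γ k ^ ν) ↔ 1 < α * ν :=
  summable_rpow_iff_of_isTheta_natCast_rpow (rho_nonneg hγ.le) (rho_isTheta hb hγ.ne')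

theorem summable_rK_rpow_iff {β γ ν : ℝ} (hγ : 0 < γ) :
    Summable (fun l => rK β γ l ^ ν) ↔ 1 < β * ν :=
  summable_rpow_iff_of_isTheta_abs_intCast_rpow (rK_nonneg hγ.le) (rK_isTheta hγ.ne')

theorem stmt_6_general (b : ℕ) (hb : b.Prime) (α β : ℝ) (hα : 1 < α) (hβ : 1 < β)
    (γ1 γ2 : ℕ → ℝ) (hγ1 : ∀ j, 0 < γ1 j ∧ γ1 j ≤ 1) (hγ2 : ∀ j, 0 < γ2 j ∧ γ2 j ≤ 1)
    (s t : ℕ) (hs : 1 ≤ s) (ht : 1 ≤ t) (ν : ℝ) :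
    Summable (fun p : (Fin s → ℕ) × (Fin t → ℤ) =>
        ((∏ j : Fin s, rho b α (γ1 j) (p.1 j)) * (∏ j : Fin t, rK β (γ2 j) (p.2 j))) ^ ν) ↔
      max (1 / α) (1 / β) < ν := by
  have hρ j k : 0 ≤ rho b α (γ1 j) k := rho_nonneg (hγ1 j).1.le k
  have hr j l : 0 ≤ rK β (γ2 j) l := rK_nonneg (hγ2 j).1.le l
  simp_rw [Real.mul_rpow (prod_nonneg fun _ _ => hρ _ _) (prod_nonneg fun _ _ => hr _ _),
    ← Real.finsetProd_rpow _ _ fun _ _ => hρ _ _, ← Real.finsetProd_rpow _ _ fun _ _ => hr _ _]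
  have : Nonempty (Fin s) := ⟨⟨0, hs⟩⟩
  have : Nonempty (Fin t) := ⟨⟨0, ht⟩⟩
  rw [summable_prod_mul_iff_of_nonneg (a₀ := 0) (b₀ := 0)
      (f := fun x : Fin s → ℕ => ∏ j : Fin s, rho b α (γ1 j) (x j) ^ ν)
      (g := fun y : Fin t → ℤ => ∏ j : Fin t, rK β (γ2 j) (y j) ^ ν)
      (fun x => prod_nonneg fun j _ => Real.rpow_nonneg (hρ _ _) ν)
      (fun y => prod_nonneg fun j _ => Real.rpow_nonneg (hr _ _) ν) (by simp [rho]) (by simp [rK]),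
    summable_pi_prod_iff_of_nonneg (h := fun (j : Fin s) k => rho b α (γ1 j) k ^ ν) (x₀ := 0)
      (fun j k => Real.rpow_nonneg (hρ _ k) ν) (by simp [rho]),
    summable_pi_prod_iff_of_nonneg (h := fun (j : Fin t) l => rK β (γ2 j) l ^ ν) (x₀ := 0)
      (fun j l => Real.rpow_nonneg (hr _ l) ν) (by simp [rK])]
  simp only [summable_rho_rpow_iff hb.one_lt (hγ1 _).1, summable_rK_rpow_iff (hγ2 _).1,
    forall_const, max_lt_iff, div_lt_iff₀ (by linarith : (0 : ℝ) < α),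
    div_lt_iff₀ (by linarith : (0 : ℝ) < β), mul_comm ν]

theorem stmt_6 (b : ℕ) (hb : b.Prime) (α β : ℝ) (hα : 1 < α) (hβ : 1 < β)
    (γ1 γ2 : ℕ → ℝ) (hγ1 : ∀ j, 0 < γ1 j ∧ γ1 j ≤ 1) (hγ2 : ∀ j, 0 < γ2 j ∧ γ2 j ≤ 1)
    (s t : ℕ) (hs : 1 ≤ s) (ht : 1 ≤ t) (ν : ℝ) (hν : 0 < ν) :
    Summable (fun p : (Fin s → ℕ) × (Fin t → ℤ) =>
        ((∏ j : Fin s, rho b α (γ1 j) (p.1 j)) * (∏ j : Fin t, rK β (γ2 j) (p.2 j))) ^ ν) ↔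
      max (1 / α) (1 / β) < ν :=
  stmt_6_general b hb α β hα hβ γ1 γ2 hγ1 hγ2 s t hs ht ν
end

section
/- Let b be a prime, α, β > 1 reals, and let 0 < γ_j^{(1)} ≤ 1 and 0 < γ_j^{(2)} ≤ 1 for all j. The following are equivalent: (i) there exists ν > 0 such that sup_{s,t ≥ 1} ∑_{(k,l) ∈ ℕ^s × ℤ^t} (ρ_{α,γ^{(1)}}(k) r_{β,γ^{(2)}}(l))^ν < ∞ (in particular all these families are summable); (ii) there exists ν > max(1/α, 1/β) such that ∑_{j=1}^∞ (γ_j^{(1)})^ν < ∞ and ∑_{j=1}^∞ (γ_j^{(2)})^ν < ∞; (iii) s_γ < ∞. -/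
open scoped BigOperators

/-- The sum exponent s_γ = inf{κ > 0 : ∑_j (γ_j^{(1)})^κ < ∞ and ∑_j (γ_j^{(2)})^κ < ∞},
    with inf ∅ = ∞ (an element of ℝ≥0∞). -/
noncomputable def sGamma (γ1 γ2 : ℕ → ℝ) : ENNReal :=
  sInf {x : ENNReal | ∃ κ : ℝ, 0 < κ ∧ x = ENNReal.ofReal κ ∧
    Summable (fun j => γ1 j ^ κ) ∧ Summable (fun j => γ2 j ^ κ)}

section aux

lemma aux_pi_tsum {X : Type*} : ∀ (s : ℕ) (F : Fin s → X → ℝ),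
    (∀ i x, 0 ≤ F i x) → (∀ i, Summable (F i)) →
    Summable (fun g : Fin s → X => ∏ i, F i (g i)) ∧
      (∑' g : Fin s → X, ∏ i, F i (g i)) = ∏ i, ∑' x, F i x := by
  intro s
  induction s with
  | zero =>
    intro F _ _
    constructor
    · exact ⟨_, hasSum_single (fun i => (i : Fin 0).elim0)
        (fun g hg => absurd (Subsingleton.elim g _) hg)⟩
    · rw [tsum_eq_single (fun i => (i : Fin 0).elim0)
        (fun g hg => absurd (Subsingleton.elim g _) hg)]
      simp
  | succ n ih =>
    intro F h0 hs
    obtain ⟨ihS, ihT⟩ := ih (fun i x => F i.succ x) (fun i x => h0 i.succ x) (fun i => hs i.succ)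
    have hGsum : Summable (fun p : X × (Fin n → X) => F 0 p.1 * ∏ i : Fin n, F i.succ (p.2 i)) := by
      have A : (0 : X → ℝ) ≤ F 0 := fun x => h0 0 x
      have B : (0 : (Fin n → X) → ℝ) ≤ fun g : Fin n → X => ∏ i, F i.succ (g i) :=
        fun g => Finset.prod_nonneg fun i _ => h0 i.succ (g i)
      have := Summable.mul_of_nonneg (hs 0) ihS A B
      exact this
    let e : X × (Fin n → X) ≃ (Fin (n + 1) → X) := (Fin.consEquiv (fun _ => X))
    have key : ∀ p : X × (Fin n → X),
        (∏ i, F i (e p i)) = F 0 p.1 * ∏ i : Fin n, F i.succ (p.2 i) := by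
      intro p
      rw [Fin.prod_univ_succ]
      simp [e, Fin.consEquiv]
    constructor
    · refine (e.summable_iff (f := fun g : Fin (n+1) → X => ∏ i, F i (g i))).mp ?_
      exact hGsum.congr fun p => (key p).symm
    · rw [← e.tsum_eq (fun g : Fin (n+1) → X => ∏ i, F i (g i))]
      calc (∑' p : X × (Fin n → X), ∏ i, F i (e p i))
          = ∑' p : X × (Fin n → X), F 0 p.1 * ∏ i : Fin n, F i.succ (p.2 i) := tsum_congr key
        _ = (∑' x, F 0 x) * ∑' g : Fin n → X, ∏ i, F i.succ (g i) :=
            (Summable.tsum_mul_tsum (hs 0) ihS hGsum).symm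
        _ = ∏ i, ∑' x, F i x := by rw [ihT, ← Fin.prod_univ_succ (fun i => ∑' x, F i x)]

lemma rho_zero (b : ℕ) (α γ : ℝ) : rho b α γ 0 = 1 := rfl

lemma rho_one (b : ℕ) (α γ : ℝ) : rho b α γ 1 = γ := by
  simp [rho, Nat.log_one_right]

lemma rK_zero (β γ : ℝ) : rK β γ 0 = 1 := rfl

lemma rK_one (β γ : ℝ) : rK β γ 1 = γ := by
  simp [rK]

lemma rho_pos {b : ℕ} (hb : 2 ≤ b) {γ : ℝ} (hγ : 0 < γ) (α : ℝ) (k : ℕ) :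
    0 < rho b α γ k := by
  have hb0 : (0:ℝ) < b := by positivity
  unfold rho
  split
  · exact one_pos
  · exact mul_pos hγ (Real.rpow_pos_of_pos hb0 _)

lemma rK_pos {γ : ℝ} (hγ : 0 < γ) (β : ℝ) (l : ℤ) : 0 < rK β γ l := by
  unfold rK
  split
  · exact one_pos
  · rename_i hl
    have : (0:ℝ) < |(l:ℝ)| := by
      simp only [abs_pos, ne_eq, Int.cast_eq_zero]; exact hl
    exact mul_pos hγ (Real.rpow_pos_of_pos this _)

lemma rho_rpow_eq {b : ℕ} (hb : 2 ≤ b) {γ : ℝ} (hγ : 0 < γ) (α ν : ℝ) (k : ℕ) :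
    rho b α γ k ^ ν =
      (if k = 0 then 1 else 0) +
        γ ^ ν * (if k = 0 then 0 else (b : ℝ) ^ (-(α * ν * (Nat.log b k : ℝ)))) := by
  have hb0 : (0:ℝ) ≤ b := by positivity
  by_cases hk : k = 0
  · simp [rho, hk]
  · rw [rho, if_neg hk, if_neg hk, if_neg hk,
      Real.mul_rpow hγ.le (Real.rpow_nonneg hb0 _), ← Real.rpow_mul hb0, zero_add]
    ring_nf

lemma rK_rpow_eq {γ : ℝ} (hγ : 0 < γ) {β ν : ℝ} (hβν : 0 < β * ν) (l : ℤ) :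
    rK β γ l ^ ν = (if l = 0 then 1 else 0) + γ ^ ν * |(l : ℝ)| ^ (-(β * ν)) := by
  by_cases hl : l = 0
  · have : -(β*ν) ≠ 0 := by intro h; rw [neg_eq_zero] at h; exact absurd h (ne_of_gt hβν)
    simp [rK, hl, Real.zero_rpow this]
  · rw [rK, if_neg hl, if_neg hl, Real.mul_rpow hγ.le (Real.rpow_nonneg (abs_nonneg _) _),
      ← Real.rpow_mul (abs_nonneg _)]
    rw [zero_add, neg_mul]

lemma aux_nat_le {b : ℕ} (hb : 2 ≤ b) {c : ℝ} (hc : 0 < c) (k : ℕ) :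
    (if k = 0 then (0:ℝ) else (b : ℝ) ^ (-(c * (Nat.log b k : ℝ)))) ≤
      (b : ℝ) ^ c * (k : ℝ) ^ (-c) := by
  have hb0 : (0:ℝ) < b := by positivity
  by_cases hk : k = 0
  · simp [hk, Real.zero_rpow (by intro h; rw [neg_eq_zero] at h; exact absurd h (ne_of_gt hc))]
  · rw [if_neg hk]
    have hk0 : (0:ℝ) < k := by
      have : 0 < k := Nat.pos_of_ne_zero hk
      exact_mod_cast this
    set m := Nat.log b k with hm
    have hlt : (k : ℝ) < (b : ℝ) ^ (m + 1) := by
      have := Nat.lt_pow_succ_log_self (by omega : 1 < b) k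
      exact_mod_cast this
    have h1 : (k : ℝ) / b ≤ (b:ℝ) ^ (m : ℝ) := by
      rw [div_le_iff₀ hb0, Real.rpow_natCast]
      calc (k:ℝ) ≤ (b:ℝ) ^ (m+1) := hlt.le
        _ = (b:ℝ)^m * b := by rw [pow_succ]
    have h2 : ((b:ℝ) ^ (m:ℝ)) ^ (-c) ≤ ((k:ℝ)/b) ^ (-c) :=
      Real.rpow_le_rpow_of_nonpos (by positivity) h1 (by linarith)
    have h3 : (b:ℝ) ^ (-(c * (m:ℝ))) = ((b:ℝ) ^ (m:ℝ)) ^ (-c) := by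
      rw [← Real.rpow_mul hb0.le]
      ring_nf
    rw [h3]
    refine h2.trans (le_of_eq ?_)
    rw [Real.div_rpow hk0.le hb0.le, Real.rpow_neg hb0.le c, div_eq_mul_inv, inv_inv]
    ring

lemma summable_aux_nat {b : ℕ} (hb : 2 ≤ b) {c : ℝ} (hc : 1 < c) :
    Summable (fun k : ℕ => if k = 0 then (0:ℝ) else (b : ℝ) ^ (-(c * (Nat.log b k : ℝ)))) := by
  have hS : Summable (fun k : ℕ => (b : ℝ) ^ c * (k : ℝ) ^ (-c)) :=
    (Real.summable_nat_rpow.mpr (by linarith)).mul_left _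
  refine hS.of_nonneg_of_le (fun k => ?_) (fun k => aux_nat_le hb (by linarith) k)
  split
  · exact le_refl 0
  · positivity

lemma nat_side {b : ℕ} (hb : 2 ≤ b) {γ α ν : ℝ} (hγ : 0 < γ) (hc : 1 < α * ν) :
    Summable (fun k : ℕ => rho b α γ k ^ ν) ∧
      ∑' k : ℕ, rho b α γ k ^ ν ≤
        1 + γ ^ ν * ((b:ℝ) ^ (α*ν) * ∑' k : ℕ, (k : ℝ) ^ (-(α*ν))) := by
  have hInd : Summable (fun k : ℕ => if k = 0 then (1:ℝ) else 0) :=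
    summable_of_ne_finset_zero (s := {0}) (by intro k hk; simp at hk; simp [hk])
  have hAux := summable_aux_nat hb hc
  have hS : Summable (fun k : ℕ => rho b α γ k ^ ν) := by
    refine ((hInd.add (hAux.mul_left (γ ^ ν)))).congr fun k => ?_
    exact (rho_rpow_eq hb hγ α ν k).symm
  refine ⟨hS, ?_⟩
  have h1 : ∑' k : ℕ, rho b α γ k ^ ν =
      (∑' k : ℕ, if k = 0 then (1:ℝ) else 0) +
        γ ^ ν * ∑' k : ℕ, (if k = 0 then (0:ℝ) else (b : ℝ) ^ (-(α * ν * (Nat.log b k : ℝ)))) := by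
    rw [← tsum_mul_left, ← Summable.tsum_add hInd (hAux.mul_left (γ ^ ν))]
    exact tsum_congr fun k => rho_rpow_eq hb hγ α ν k
  rw [h1]
  have h2 : (∑' k : ℕ, if k = 0 then (1:ℝ) else 0) = 1 := by
    rw [tsum_eq_sum (s := {0}) (by intro k hk; simp at hk; simp [hk])]
    simp
  rw [h2]
  refine add_le_add le_rfl (mul_le_mul_of_nonneg_left ?_ (Real.rpow_nonneg hγ.le ν))
  rw [← tsum_mul_left]
  refine Summable.tsum_le_tsum (fun k => aux_nat_le hb (by linarith) k) hAux ?_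
  exact ((Real.summable_nat_rpow.mpr (by linarith)).mul_left _)

lemma int_side {γ β ν : ℝ} (hγ : 0 < γ) (hc : 1 < β * ν) :
    Summable (fun l : ℤ => rK β γ l ^ ν) ∧
      ∑' l : ℤ, rK β γ l ^ ν ≤ 1 + γ ^ ν * ∑' l : ℤ, |(l : ℝ)| ^ (-(β*ν)) := by
  have hβν : 0 < β * ν := by linarith
  have hAux : Summable (fun l : ℤ => |(l : ℝ)| ^ (-(β*ν))) := Real.summable_abs_int_rpow hc
  have hInd : Summable (fun l : ℤ => if l = 0 then (1:ℝ) else 0) :=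
    summable_of_ne_finset_zero (s := {0}) (by intro l hl; simp at hl; simp [hl])
  have hS : Summable (fun l : ℤ => rK β γ l ^ ν) := by
    refine ((hInd.add (hAux.mul_left (γ ^ ν)))).congr fun l => ?_
    exact (rK_rpow_eq hγ hβν l).symm
  refine ⟨hS, ?_⟩
  have h1 : ∑' l : ℤ, rK β γ l ^ ν =
      (∑' l : ℤ, if l = 0 then (1:ℝ) else 0) + γ ^ ν * ∑' l : ℤ, |(l : ℝ)| ^ (-(β*ν)) := by
    rw [← tsum_mul_left, ← Summable.tsum_add hInd (hAux.mul_left (γ ^ ν))]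
    exact tsum_congr fun l => rK_rpow_eq hγ hβν l
  rw [h1]
  have h2 : (∑' l : ℤ, if l = 0 then (1:ℝ) else 0) = 1 := by
    rw [tsum_eq_sum (s := {0}) (by intro l hl; simp at hl; simp [hl])]
    simp
  rw [h2]

lemma nat_div {b : ℕ} (hb : 2 ≤ b) {γ α ν : ℝ} (hγ : 0 < γ) (hα : 0 < α) (hν : 0 < ν)
    (hS : Summable (fun k : ℕ => rho b α γ k ^ ν)) : 1 < α * ν := by
  have hb0 : (0:ℝ) < b := by positivity
  have hc : 0 < α * ν := by positivity
  have hγν : (0:ℝ) < γ ^ ν := Real.rpow_pos_of_pos hγ ν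
  have comp : ∀ k : ℕ, γ ^ ν * (k : ℝ) ^ (-(α*ν)) ≤ rho b α γ k ^ ν := by
    intro k
    rw [rho_rpow_eq hb hγ α ν k]
    by_cases hk : k = 0
    · simp [hk, Real.zero_rpow (by intro h; rw [neg_eq_zero] at h; exact absurd h (ne_of_gt hc))]
    · rw [if_neg hk, if_neg hk, zero_add]
      refine mul_le_mul_of_nonneg_left ?_ hγν.le
      have hk0 : (0:ℝ) < k := by exact_mod_cast Nat.pos_of_ne_zero hk
      have hle : (b:ℝ) ^ ((Nat.log b k : ℕ) : ℝ) ≤ (k : ℝ) := by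
        rw [Real.rpow_natCast]
        exact_mod_cast Nat.pow_log_le_self b hk
      have h2 : (k:ℝ) ^ (-(α*ν)) ≤ ((b:ℝ) ^ ((Nat.log b k : ℕ):ℝ)) ^ (-(α*ν)) :=
        Real.rpow_le_rpow_of_nonpos (by positivity) hle (by linarith)
      refine h2.trans (le_of_eq ?_)
      rw [← Real.rpow_mul hb0.le]
      ring_nf
  have hS2 : Summable (fun k : ℕ => γ ^ ν * (k : ℝ) ^ (-(α*ν))) :=
    hS.of_nonneg_of_le (fun k => by positivity) comp
  have hS3 : Summable (fun k : ℕ => (k : ℝ) ^ (-(α*ν))) :=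
    (summable_mul_left_iff (ne_of_gt hγν)).mp hS2
  have := Real.summable_nat_rpow.mp hS3
  linarith

lemma int_div {γ β ν : ℝ} (hγ : 0 < γ) (hβ : 0 < β) (hν : 0 < ν)
    (hS : Summable (fun l : ℤ => rK β γ l ^ ν)) : 1 < β * ν := by
  have hc : 0 < β * ν := by positivity
  have hγν : (0:ℝ) < γ ^ ν := Real.rpow_pos_of_pos hγ ν
  have comp : ∀ l : ℤ, γ ^ ν * |(l : ℝ)| ^ (-(β*ν)) ≤ rK β γ l ^ ν := by
    intro l
    rw [rK_rpow_eq hγ hc l]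
    have : (0:ℝ) ≤ if l = 0 then 1 else 0 := by split <;> norm_num
    linarith
  have hS2 : Summable (fun l : ℤ => γ ^ ν * |(l : ℝ)| ^ (-(β*ν))) :=
    hS.of_nonneg_of_le (fun l => by positivity) comp
  have hS3 : Summable (fun l : ℤ => |(l : ℝ)| ^ (-(β*ν))) :=
    (summable_mul_left_iff (ne_of_gt hγν)).mp hS2
  have hS4 : Summable (fun n : ℕ => |((n : ℤ) : ℝ)| ^ (-(β*ν))) :=
    hS3.comp_injective (fun a b h => by exact_mod_cast h)
  have hS5 : Summable (fun n : ℕ => (n : ℝ) ^ (-(β*ν))) := by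
    refine hS4.congr fun n => ?_
    rw [Int.cast_natCast, abs_of_nonneg (Nat.cast_nonneg n)]
  have := Real.summable_nat_rpow.mp hS5
  linarith

end aux

theorem stmt_7 (b : ℕ) (hb : b.Prime) (α β : ℝ) (hα : 1 < α) (hβ : 1 < β)
    (γ1 γ2 : ℕ → ℝ) (hγ1 : ∀ j, 0 < γ1 j ∧ γ1 j ≤ 1) (hγ2 : ∀ j, 0 < γ2 j ∧ γ2 j ≤ 1) :
    ((∃ ν : ℝ, 0 < ν ∧ ∃ C : ℝ, ∀ s t : ℕ, 1 ≤ s → 1 ≤ t →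
        Summable (fun p : (Fin s → ℕ) × (Fin t → ℤ) =>
          ((∏ j : Fin s, rho b α (γ1 j) (p.1 j)) * (∏ j : Fin t, rK β (γ2 j) (p.2 j))) ^ ν) ∧
        ∑' p : (Fin s → ℕ) × (Fin t → ℤ),
          ((∏ j : Fin s, rho b α (γ1 j) (p.1 j)) * (∏ j : Fin t, rK β (γ2 j) (p.2 j))) ^ ν ≤ C)
      ↔
      (∃ ν : ℝ, max (1 / α) (1 / β) < ν ∧
        Summable (fun j => γ1 j ^ ν) ∧ Summable (fun j => γ2 j ^ ν))) ∧
    ((∃ ν : ℝ, max (1 / α) (1 / β) < ν ∧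
        Summable (fun j => γ1 j ^ ν) ∧ Summable (fun j => γ2 j ^ ν))
      ↔ sGamma γ1 γ2 < ⊤) := by
  have hb2 : 2 ≤ b := hb.two_le
  have hα0 : (0:ℝ) < α := by linarith
  have hβ0 : (0:ℝ) < β := by linarith
  constructor
  · constructor
    · -- (i) → (ii)
      rintro ⟨ν, hν0, C, H⟩
      obtain ⟨hS11, hB11⟩ := H 1 1 le_rfl le_rfl
      have hFnn : ∀ (s t : ℕ) (p : (Fin s → ℕ) × (Fin t → ℤ)),
          0 ≤ ((∏ j : Fin s, rho b α (γ1 j) (p.1 j)) *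
            (∏ j : Fin t, rK β (γ2 j) (p.2 j))) ^ ν := by
        intro s t p
        apply Real.rpow_nonneg
        exact mul_nonneg
          (Finset.prod_nonneg fun j _ => (rho_pos hb2 (hγ1 j).1 α (p.1 j)).le)
          (Finset.prod_nonneg fun j _ => (rK_pos (hγ2 j).1 β (p.2 j)).le)
      have hC0 : 0 ≤ C := le_trans (tsum_nonneg (hFnn 1 1)) hB11
      -- 1/α < ν and 1/β < ν
      have hsrho : Summable (fun k : ℕ => rho b α (γ1 0) k ^ ν) := by
        have einj : Function.Injective
            (fun k : ℕ => ((fun _ => k, fun _ => 0) : (Fin 1 → ℕ) × (Fin 1 → ℤ))) :=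
          fun k k' h => congrFun (congrArg Prod.fst h) 0
        refine (hS11.comp_injective einj).congr fun k => ?_
        simp [Function.comp, Fin.prod_univ_one, rK_zero]
      have hsrK : Summable (fun l : ℤ => rK β (γ2 0) l ^ ν) := by
        have einj : Function.Injective
            (fun l : ℤ => ((fun _ => 0, fun _ => l) : (Fin 1 → ℕ) × (Fin 1 → ℤ))) :=
          fun l l' h => congrFun (congrArg Prod.snd h) 0
        refine (hS11.comp_injective einj).congr fun l => ?_
        simp [Function.comp, Fin.prod_univ_one, rho_zero]
      have h1α : 1 < α * ν := nat_div hb2 (hγ1 0).1 hα0 hν0 hsrho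
      have h1β : 1 < β * ν := int_div (hγ2 0).1 hβ0 hν0 hsrK
      refine ⟨ν, ?_, ?_, ?_⟩
      · refine max_lt ?_ ?_
        · rw [div_lt_iff₀ hα0]
          nlinarith
        · rw [div_lt_iff₀ hβ0]
          nlinarith
      · -- Summable γ1^ν
        have key1 : ∀ n : ℕ, ∑ j ∈ Finset.range n, γ1 j ^ ν ≤ C := by
          intro n
          rcases Nat.eq_zero_or_pos n with hn | hn
          · simp [hn, hC0]
          obtain ⟨hSs, hBs⟩ := H n 1 hn le_rfl
          set e : Fin n → (Fin n → ℕ) × (Fin 1 → ℤ) :=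
            fun i => (fun j => if j = i then 1 else 0, fun _ => 0) with he
          have einj : Function.Injective e := by
            intro i i' h
            by_contra hne
            have := congrFun (congrArg Prod.fst h) i
            simp [he, hne] at this
          have hval : ∀ i : Fin n,
              ((∏ j : Fin n, rho b α (γ1 j) ((e i).1 j)) *
                (∏ j : Fin 1, rK β (γ2 j) ((e i).2 j))) ^ ν = γ1 i ^ ν := by
            intro i
            have h1 : (∏ j : Fin n, rho b α (γ1 j) ((e i).1 j)) = γ1 i := by
              rw [Finset.prod_eq_single i]
              · simp [he, rho_one]
              · intro j _ hj
                simp [he, hj, rho_zero]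
              · intro h; exact absurd (Finset.mem_univ i) h
            have h2 : (∏ j : Fin 1, rK β (γ2 j) ((e i).2 j)) = 1 := by
              simp [he, rK_zero]
            rw [h1, h2, mul_one]
          calc ∑ j ∈ Finset.range n, γ1 j ^ ν
              = ∑ i : Fin n, γ1 i ^ ν := (Fin.sum_univ_eq_sum_range (fun j => γ1 j ^ ν) n).symm
            _ = ∑ i : Fin n,
                  ((∏ j : Fin n, rho b α (γ1 j) ((e i).1 j)) *
                    (∏ j : Fin 1, rK β (γ2 j) ((e i).2 j))) ^ ν :=
                (Finset.sum_congr rfl fun i _ => (hval i).symm)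
            _ = ∑ p ∈ Finset.image e Finset.univ,
                  ((∏ j : Fin n, rho b α (γ1 j) (p.1 j)) *
                    (∏ j : Fin 1, rK β (γ2 j) (p.2 j))) ^ ν := by
                rw [Finset.sum_image (fun i _ i' _ h => einj h)]
            _ ≤ ∑' p : (Fin n → ℕ) × (Fin 1 → ℤ),
                  ((∏ j : Fin n, rho b α (γ1 j) (p.1 j)) *
                    (∏ j : Fin 1, rK β (γ2 j) (p.2 j))) ^ ν :=
                Summable.sum_le_tsum _ (fun p _ => hFnn n 1 p) hSs
            _ ≤ C := hBs
        exact summable_of_sum_range_le (fun j => Real.rpow_nonneg (hγ1 j).1.le ν) key1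
      · -- Summable γ2^ν
        have key2 : ∀ n : ℕ, ∑ j ∈ Finset.range n, γ2 j ^ ν ≤ C := by
          intro n
          rcases Nat.eq_zero_or_pos n with hn | hn
          · simp [hn, hC0]
          obtain ⟨hSs, hBs⟩ := H 1 n le_rfl hn
          set e : Fin n → (Fin 1 → ℕ) × (Fin n → ℤ) :=
            fun i => (fun _ => 0, fun j => if j = i then 1 else 0) with he
          have einj : Function.Injective e := by
            intro i i' h
            by_contra hne
            have := congrFun (congrArg Prod.snd h) i
            simp [he, hne] at this
          have hval : ∀ i : Fin n,
              ((∏ j : Fin 1, rho b α (γ1 j) ((e i).1 j)) *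
                (∏ j : Fin n, rK β (γ2 j) ((e i).2 j))) ^ ν = γ2 i ^ ν := by
            intro i
            have h1 : (∏ j : Fin 1, rho b α (γ1 j) ((e i).1 j)) = 1 := by
              simp [he, rho_zero]
            have h2 : (∏ j : Fin n, rK β (γ2 j) ((e i).2 j)) = γ2 i := by
              rw [Finset.prod_eq_single i]
              · simp [he, rK_one]
              · intro j _ hj
                simp [he, hj, rK_zero]
              · intro h; exact absurd (Finset.mem_univ i) h
            rw [h1, h2, one_mul]
          calc ∑ j ∈ Finset.range n, γ2 j ^ ν
              = ∑ i : Fin n, γ2 i ^ ν := (Fin.sum_univ_eq_sum_range (fun j => γ2 j ^ ν) n).symm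
            _ = ∑ i : Fin n,
                  ((∏ j : Fin 1, rho b α (γ1 j) ((e i).1 j)) *
                    (∏ j : Fin n, rK β (γ2 j) ((e i).2 j))) ^ ν :=
                (Finset.sum_congr rfl fun i _ => (hval i).symm)
            _ = ∑ p ∈ Finset.image e Finset.univ,
                  ((∏ j : Fin 1, rho b α (γ1 j) (p.1 j)) *
                    (∏ j : Fin n, rK β (γ2 j) (p.2 j))) ^ ν := by
                rw [Finset.sum_image (fun i _ i' _ h => einj h)]
            _ ≤ ∑' p : (Fin 1 → ℕ) × (Fin n → ℤ),
                  ((∏ j : Fin 1, rho b α (γ1 j) (p.1 j)) *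
                    (∏ j : Fin n, rK β (γ2 j) (p.2 j))) ^ ν :=
                Summable.sum_le_tsum _ (fun p _ => hFnn 1 n p) hSs
            _ ≤ C := hBs
        exact summable_of_sum_range_le (fun j => Real.rpow_nonneg (hγ2 j).1.le ν) key2
    · -- (ii) → (i)
      rintro ⟨ν, hν, hsum1, hsum2⟩
      have hν1 : 1/α < ν := lt_of_le_of_lt (le_max_left _ _) hν
      have hν2 : 1/β < ν := lt_of_le_of_lt (le_max_right _ _) hν
      have hν0 : 0 < ν := lt_trans (by positivity) hν1
      have h1α : 1 < α * ν := by
        rw [div_lt_iff₀ hα0] at hν1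
        nlinarith
      have h1β : 1 < β * ν := by
        rw [div_lt_iff₀ hβ0] at hν2
        nlinarith
      set D1 : ℝ := (b:ℝ) ^ (α*ν) * ∑' k : ℕ, (k : ℝ) ^ (-(α*ν)) with hD1
      set D2 : ℝ := ∑' l : ℤ, |(l : ℝ)| ^ (-(β*ν)) with hD2
      have hD1nn : 0 ≤ D1 :=
        mul_nonneg (Real.rpow_nonneg (by positivity) _)
          (tsum_nonneg fun k => Real.rpow_nonneg (Nat.cast_nonneg k) _)
      have hD2nn : 0 ≤ D2 := tsum_nonneg fun l => Real.rpow_nonneg (abs_nonneg _) _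
      set T1 : ℝ := ∑' j : ℕ, γ1 j ^ ν with hT1
      set T2 : ℝ := ∑' j : ℕ, γ2 j ^ ν with hT2
      refine ⟨ν, hν0, Real.exp (T1 * D1) * Real.exp (T2 * D2), ?_⟩
      intro s t hs ht
      -- one-dimensional facts
      have hF1nn : ∀ (j : Fin s) (k : ℕ), 0 ≤ rho b α (γ1 j) k ^ ν :=
        fun j k => Real.rpow_nonneg (rho_pos hb2 (hγ1 j).1 α k).le ν
      have hF2nn : ∀ (j : Fin t) (l : ℤ), 0 ≤ rK β (γ2 j) l ^ ν :=
        fun j l => Real.rpow_nonneg (rK_pos (hγ2 j).1 β l).le ν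
      obtain ⟨hQ1sum, hQ1t⟩ := aux_pi_tsum s (fun j k => rho b α (γ1 j) k ^ ν)
        hF1nn (fun j => (nat_side hb2 (hγ1 j).1 h1α).1)
      obtain ⟨hQ2sum, hQ2t⟩ := aux_pi_tsum t (fun j l => rK β (γ2 j) l ^ ν)
        hF2nn (fun j => (int_side (hγ2 j).1 h1β).1)
      have hFeq : ∀ p : (Fin s → ℕ) × (Fin t → ℤ),
          ((∏ j : Fin s, rho b α (γ1 j) (p.1 j)) * (∏ j : Fin t, rK β (γ2 j) (p.2 j))) ^ ν =
            (∏ j : Fin s, rho b α (γ1 j) (p.1 j) ^ ν) *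
              (∏ j : Fin t, rK β (γ2 j) (p.2 j) ^ ν) := by
        intro p
        rw [Real.mul_rpow
            (Finset.prod_nonneg fun (j : Fin s) _ => (rho_pos hb2 (hγ1 j).1 α (p.1 j)).le)
            (Finset.prod_nonneg fun (j : Fin t) _ => (rK_pos (hγ2 j).1 β (p.2 j)).le),
          ← Real.finset_prod_rpow _ _ (fun (j : Fin s) _ => (rho_pos hb2 (hγ1 j).1 α (p.1 j)).le) ν,
          ← Real.finset_prod_rpow _ _ (fun (j : Fin t) _ => (rK_pos (hγ2 j).1 β (p.2 j)).le) ν]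
      have hmul : Summable (fun p : (Fin s → ℕ) × (Fin t → ℤ) =>
          (∏ j : Fin s, rho b α (γ1 j) (p.1 j) ^ ν) *
            (∏ j : Fin t, rK β (γ2 j) (p.2 j) ^ ν)) := by
        have A : (0 : (Fin s → ℕ) → ℝ) ≤ fun g => ∏ j : Fin s, rho b α (γ1 j) (g j) ^ ν :=
          fun g => Finset.prod_nonneg fun j _ => hF1nn j (g j)
        have B : (0 : (Fin t → ℤ) → ℝ) ≤ fun g => ∏ j : Fin t, rK β (γ2 j) (g j) ^ ν :=
          fun g => Finset.prod_nonneg fun j _ => hF2nn j (g j)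
        have := Summable.mul_of_nonneg hQ1sum hQ2sum A B
        exact this
      constructor
      · exact hmul.congr fun p => (hFeq p).symm
      · rw [tsum_congr hFeq, ← Summable.tsum_mul_tsum hQ1sum hQ2sum hmul, hQ1t, hQ2t]
        have bound1 : (∏ j : Fin s, ∑' k : ℕ, rho b α (γ1 j) k ^ ν) ≤ Real.exp (T1 * D1) := by
          have step1 : ∀ j : Fin s, (∑' k : ℕ, rho b α (γ1 j) k ^ ν) ≤
              Real.exp (γ1 j ^ ν * D1) := by
            intro j
            refine le_trans (nat_side hb2 (hγ1 j).1 h1α).2 ?_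
            rw [add_comm]
            exact Real.add_one_le_exp _
          calc (∏ j : Fin s, ∑' k : ℕ, rho b α (γ1 j) k ^ ν)
              ≤ ∏ j : Fin s, Real.exp (γ1 j ^ ν * D1) :=
                Finset.prod_le_prod (fun j _ => tsum_nonneg fun k => hF1nn j k)
                  (fun j _ => step1 j)
            _ = Real.exp (∑ j : Fin s, γ1 (j:ℕ) ^ ν * D1) := (Real.exp_sum _ _).symm
            _ ≤ Real.exp (T1 * D1) := by
                refine Real.exp_le_exp.mpr ?_
                rw [← Finset.sum_mul]
                refine mul_le_mul_of_nonneg_right ?_ hD1nn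
                rw [Fin.sum_univ_eq_sum_range (fun j => γ1 j ^ ν) s]
                exact Summable.sum_le_tsum _ (fun j _ => Real.rpow_nonneg (hγ1 j).1.le ν) hsum1
        have bound2 : (∏ j : Fin t, ∑' l : ℤ, rK β (γ2 j) l ^ ν) ≤ Real.exp (T2 * D2) := by
          have step2 : ∀ j : Fin t, (∑' l : ℤ, rK β (γ2 j) l ^ ν) ≤
              Real.exp (γ2 j ^ ν * D2) := by
            intro j
            refine le_trans (int_side (hγ2 j).1 h1β).2 ?_
            rw [add_comm]
            exact Real.add_one_le_exp _
          calc (∏ j : Fin t, ∑' l : ℤ, rK β (γ2 j) l ^ ν)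
              ≤ ∏ j : Fin t, Real.exp (γ2 j ^ ν * D2) :=
                Finset.prod_le_prod (fun j _ => tsum_nonneg fun l => hF2nn j l)
                  (fun j _ => step2 j)
            _ = Real.exp (∑ j : Fin t, γ2 (j:ℕ) ^ ν * D2) := (Real.exp_sum _ _).symm
            _ ≤ Real.exp (T2 * D2) := by
                refine Real.exp_le_exp.mpr ?_
                rw [← Finset.sum_mul]
                refine mul_le_mul_of_nonneg_right ?_ hD2nn
                rw [Fin.sum_univ_eq_sum_range (fun j => γ2 j ^ ν) t]
                exact Summable.sum_le_tsum _ (fun j _ => Real.rpow_nonneg (hγ2 j).1.le ν) hsum2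
        exact mul_le_mul bound1 bound2
          (Finset.prod_nonneg fun j _ => tsum_nonneg fun l => hF2nn j l)
          (Real.exp_nonneg _)
  · constructor
    · -- (ii) → (iii)
      rintro ⟨ν, hν, hsum1, hsum2⟩
      have hν0 : 0 < ν := by
        have : (0:ℝ) < 1/α := by positivity
        exact lt_trans (lt_of_lt_of_le this (le_max_left _ _)) hν
      refine lt_of_le_of_lt (sInf_le ⟨ν, hν0, rfl, hsum1, hsum2⟩) ENNReal.ofReal_lt_top
    · -- (iii) → (ii)
      intro h
      have hne : {x : ENNReal | ∃ κ : ℝ, 0 < κ ∧ x = ENNReal.ofReal κ ∧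
          Summable (fun j => γ1 j ^ κ) ∧ Summable (fun j => γ2 j ^ κ)}.Nonempty := by
        by_contra hemp
        rw [Set.not_nonempty_iff_eq_empty] at hemp
        rw [sGamma, hemp, sInf_empty] at h
        exact lt_irrefl _ h
      obtain ⟨x, κ, hκ0, -, hs1, hs2⟩ := hne
      set ν : ℝ := max κ (max (1/α) (1/β) + 1) with hν
      refine ⟨ν, ?_, ?_, ?_⟩
      · exact lt_of_lt_of_le (lt_add_one _) (le_max_right _ _)
      · refine hs1.of_nonneg_of_le (fun j => Real.rpow_nonneg (hγ1 j).1.le ν) fun j => ?_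
        exact Real.rpow_le_rpow_of_exponent_ge (hγ1 j).1 (hγ1 j).2 (le_max_left _ _)
      · refine hs2.of_nonneg_of_le (fun j => Real.rpow_nonneg (hγ2 j).1.le ν) fun j => ?_
        exact Real.rpow_le_rpow_of_exponent_ge (hγ2 j).1 (hγ2 j).2 (le_max_left _ _)
end
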